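/- For the hydrodynamic system u^i_t = (η_{nj} u^j u^i + α^{ij} η_{jk} u^k)_x with A^i_k(u) = η_{nj}u^j δ^i_k + u^i η_{nk} + α^{ir}η_{rk} (η symmetric, α symmetric), the Haantjes tensor of the matrix field A vanishes identically. -/

import Mathlib

open Finset

namespace HydroHaantjes

variable (n : ℕ) (hn : 0 < n)

/-- The last index `n` (0-indexed: `n-1`). -/
noncomputable def lastIdx : Fin n := ⟨n - 1, Nat.sub_lt hn Nat.one_pos⟩

/-- The (1,1)-tensor field `A^i_k(u) = η_{nj}u^j δ^i_k + u^i η_{nk} + α^{ir}η_{rk}`. -/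
noncomputable def Amat (η α : Matrix (Fin n) (Fin n) ℂ) (u : Fin n → ℂ) (i k : Fin n) : ℂ :=
  (∑ j : Fin n, η (lastIdx n hn) j * u j) * (if i = k then 1 else 0)
    + u i * η (lastIdx n hn) k
    + ∑ r : Fin n, α i r * η r k

/-- The partial derivative `∂_r A^i_k` of `Amat` (which is affine in `u`):
`∂_r A^i_k = η_{nr} δ^i_k + δ^i_r η_{nk}`. -/
noncomputable def DAmat (η : Matrix (Fin n) (Fin n) ℂ) (r i k : Fin n) : ℂ :=
  η (lastIdx n hn) r * (if i = k then 1 else 0)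
    + (if i = r then 1 else 0) * η (lastIdx n hn) k

/-- The Nijenhuis tensor
`N^i_{jk} = A^r_j ∂_r A^i_k - A^r_k ∂_r A^i_j - A^i_r (∂_j A^r_k - ∂_k A^r_j)`. -/
noncomputable def Nij (η α : Matrix (Fin n) (Fin n) ℂ) (u : Fin n → ℂ) (i j k : Fin n) : ℂ :=
  (∑ r : Fin n, Amat n hn η α u r j * DAmat n hn η r i k)
    - (∑ r : Fin n, Amat n hn η α u r k * DAmat n hn η r i j)
    - ∑ r : Fin n, Amat n hn η α u i r *
        (DAmat n hn η j r k - DAmat n hn η k r j)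

/-- The Haantjes tensor
`H^i_{jk} = N^i_{rs}A^r_j A^s_k - N^r_{js}A^i_r A^s_k - N^r_{sk}A^i_r A^s_j + N^r_{jk}A^i_s A^s_r`. -/
noncomputable def Haantjes (η α : Matrix (Fin n) (Fin n) ℂ) (u : Fin n → ℂ) (i j k : Fin n) : ℂ :=
  (∑ r : Fin n, ∑ s : Fin n,
      Nij n hn η α u i r s * Amat n hn η α u r j * Amat n hn η α u s k)
    - (∑ r : Fin n, ∑ s : Fin n,
      Nij n hn η α u r j s * Amat n hn η α u i r * Amat n hn η α u s k)
    - (∑ r : Fin n, ∑ s : Fin n,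
      Nij n hn η α u r s k * Amat n hn η α u i r * Amat n hn η α u s j)
    + ∑ r : Fin n, ∑ s : Fin n,
      Nij n hn η α u r j k * Amat n hn η α u i s * Amat n hn η α u s r

end HydroHaantjes

/-!
Since `∂_r A^i_k = e_r δ^i_k + δ^i_r e_k` with `e = η_{n·}`, the Nijenhuis torsion of `A` is
`A ∧ e - 1 ∧ (eA)`, where `(B ∧ c)^i_{jk} = B^i_j c_k - B^i_k c_j`. The Haantjes tensor is linear
in the torsion, and for a torsion `B ∧ c` it is an explicit combination of `BA`, `AB`, `ABA` and
`A²B` that cancels whenever `B` commutes with `A`, as both `A` and `1` do.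
-/

open Finset Matrix

section

variable {ι R : Type*} [Fintype ι] [CommRing R]

def haantjesTensor (A : Matrix ι ι R) (N : ι → ι → ι → R) (i j k : ι) : R :=
  (∑ r, ∑ s, N i r s * A r j * A s k) - (∑ r, ∑ s, N r j s * A i r * A s k)
    - (∑ r, ∑ s, N r s k * A i r * A s j) + ∑ r, ∑ s, N r j k * A i s * A s r

def wedgeTensor (B : Matrix ι ι R) (c : ι → R) (i j k : ι) : R :=
  B i j * c k - B i k * c j

lemma haantjesTensor_sub (A : Matrix ι ι R) (N N' : ι → ι → ι → R) (i j k : ι) :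
    haantjesTensor A (N - N') i j k = haantjesTensor A N i j k - haantjesTensor A N' i j k := by
  simp only [haantjesTensor, Pi.sub_apply, sub_mul, sum_sub_distrib]
  ring

lemma haantjesTensor_wedgeTensor (A B : Matrix ι ι R) (c : ι → R) (i j k : ι) :
    haantjesTensor A (wedgeTensor B c) i j k =
      ((B * A) i j * (c ᵥ* A) k - (B * A) i k * (c ᵥ* A) j)
        - ((A * B) i j * (c ᵥ* A) k - (A * B * A) i k * c j)
        - ((A * B * A) i j * c k - (A * B) i k * (c ᵥ* A) j)
        + ((A * A * B) i j * c k - (A * A * B) i k * c j) := by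
  obtain ⟨h₁, h₂, h₃, h₄⟩ :
      ∑ r, ∑ s, wedgeTensor B c i r s * A r j * A s k =
          (B * A) i j * (c ᵥ* A) k - (B * A) i k * (c ᵥ* A) j ∧
        ∑ r, ∑ s, wedgeTensor B c r j s * A i r * A s k =
          (A * B) i j * (c ᵥ* A) k - (A * B * A) i k * c j ∧
        ∑ r, ∑ s, wedgeTensor B c r s k * A i r * A s j =
          (A * B * A) i j * c k - (A * B) i k * (c ᵥ* A) j ∧
        ∑ r, ∑ s, wedgeTensor B c r j k * A i s * A s r =
          (A * A * B) i j * c k - (A * A * B) i k * c j := by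
    refine ⟨?_, ?_, ?_, ?_⟩ <;>
    simp only [wedgeTensor, mul_apply, vecMul, dotProduct, sub_mul, sum_sub_distrib, sum_mul,
      mul_sum] <;>
    congr 1 <;>
    first
      | (refine sum_congr rfl fun _ _ => sum_congr rfl fun _ _ => ?_; ring1)
      | (rw [sum_comm]; refine sum_congr rfl fun _ _ => sum_congr rfl fun _ _ => ?_; ring1)
  rw [haantjesTensor, h₁, h₂, h₃, h₄]

lemma haantjesTensor_wedgeTensor_of_commute {A B : Matrix ι ι R} (hAB : Commute A B)
    (c : ι → R) (i j k : ι) : haantjesTensor A (wedgeTensor B c) i j k = 0 := by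
  rw [haantjesTensor_wedgeTensor, Matrix.mul_assoc A A B, hAB.eq, ← Matrix.mul_assoc, hAB.eq]
  ring

end

namespace HydroHaantjes

variable (n : ℕ) (hn : 0 < n)

lemma haantjes_eq_haantjesTensor (η α : Matrix (Fin n) (Fin n) ℂ) (u : Fin n → ℂ) :
    Haantjes n hn η α u = haantjesTensor (of (Amat n hn η α u)) (Nij n hn η α u) :=
  rfl

lemma DAmat_swap (η : Matrix (Fin n) (Fin n) ℂ) (j r k : Fin n) :
    DAmat n hn η j r k = DAmat n hn η k r j := by
  simp only [DAmat]
  ring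

lemma sum_mul_DAmat (η : Matrix (Fin n) (Fin n) ℂ) (A : Fin n → Fin n → ℂ) (i j k : Fin n) :
    ∑ r, A r j * DAmat n hn η r i k =
      (η (lastIdx n hn) ᵥ* of A) j * (if i = k then 1 else 0) + A i j * η (lastIdx n hn) k := by
  simp only [DAmat, mul_add, sum_add_distrib, vecMul, dotProduct, of_apply, sum_mul]
  congr 1
  · exact sum_congr rfl fun _ _ => by ring
  · simp

lemma nij_eq_wedgeTensor_sub (η α : Matrix (Fin n) (Fin n) ℂ) (u : Fin n → ℂ) :
    Nij n hn η α u =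
      wedgeTensor (of (Amat n hn η α u)) (η (lastIdx n hn))
        - wedgeTensor 1 (η (lastIdx n hn) ᵥ* of (Amat n hn η α u)) := by
  ext i j k
  simp only [Nij, sum_mul_DAmat, DAmat_swap n hn η j _ k, sub_self, mul_zero, sum_const_zero,
    wedgeTensor, Pi.sub_apply, one_apply, of_apply]
  ring

end HydroHaantjes

theorem haantjes_vanishes_general (n : ℕ) (hn : 0 < n)
    (η α : Matrix (Fin n) (Fin n) ℂ) :
    ∀ (u : Fin n → ℂ) (i j k : Fin n),
      HydroHaantjes.Haantjes n hn η α u i j k = 0 := by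
  intro u i j k
  rw [HydroHaantjes.haantjes_eq_haantjesTensor, HydroHaantjes.nij_eq_wedgeTensor_sub,
    haantjesTensor_sub, haantjesTensor_wedgeTensor_of_commute (Commute.refl _),
    haantjesTensor_wedgeTensor_of_commute (Commute.one_right _), sub_zero]

/-- For the hydrodynamic system with `A^i_k(u) = η_{nj}u^j δ^i_k + u^i η_{nk} + α^{ir}η_{rk}`
(`η`, `α` symmetric), the Haantjes tensor vanishes identically. -/
theorem haantjes_vanishes (n : ℕ) (hn : 0 < n)
    (η α : Matrix (Fin n) (Fin n) ℂ)
    (hη : ∀ i j, η i j = η j i) (hα : ∀ i j, α i j = α j i) :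
    ∀ (u : Fin n → ℂ) (i j k : Fin n),
      HydroHaantjes.Haantjes n hn η α u i j k = 0 :=
  haantjes_vanishes_general n hn η α
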